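/- There exists a finite deterministic MDP, a starting state, and a set of constituent policies such that for all horizons H ≥ 3, every max-following policy obtains cumulative reward at most ε < 1 while the optimal policy obtains cumulative reward H − 2; hence the gap between max-following and optimal can be made arbitrarily large. -/

import Mathlib

/-!
From `s2`, `right` earns `ε` and falls into the absorbing zero-reward state `s3`; `left` and `up`
never reach the rewarding state `s4` when followed forever, so they are worth `0` there. Hence every
max-following policy plays `right` at `s2` and earns `ε`, while `left` followed by `up` reaches
`s4` after two steps and earns `1` on each of the remaining `H - 2`.
-/

/-- Value function of a policy in a deterministic finite-horizon MDP with transition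
function `next` and reward `R`. -/
def dval {S A : Type} (next : S → A → S) (R : S → A → ℝ)
    (H : ℕ) (π : ℕ → S → A) : ℕ → S → ℝ
  | h, s =>
    if h < H then R s (π h s) + dval next R H π (h + 1) (next s (π h s))
    else 0
termination_by h _ => H - h
decreasing_by omega

section dval

variable {S A : Type} {next : S → A → S} {R : S → A → ℝ} {H : ℕ} {π : ℕ → S → A}

theorem dval_of_lt {h : ℕ} (hh : h < H) (s : S) :
    dval next R H π h s = R s (π h s) + dval next R H π (h + 1) (next s (π h s)) := by
  rw [dval, if_pos hh]

theorem dval_of_le {h : ℕ} (hh : H ≤ h) (s : S) : dval next R H π h s = 0 := by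
  rw [dval, if_neg (not_lt.2 hh)]

theorem dval_eq_of_mapsTo {T : Set S} {r : ℝ}
    (hT : ∀ h, Set.MapsTo (fun s => next s (π h s)) T T)
    (hR : ∀ h, ∀ s ∈ T, R s (π h s) = r) (h : ℕ) {s : S} (hs : s ∈ T) :
    dval next R H π h s = (H - h : ℕ) * r := by
  induction hn : H - h generalizing h s with
  | zero => rw [dval_of_le (by omega), Nat.cast_zero, zero_mul]
  | succ n ih =>
    rw [dval_of_lt (by omega), hR h s hs, ih (h + 1) (hT h hs) (by omega)]
    push_cast
    ring

end dval

namespace GapMDP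

inductive State | s0 | s1 | s2 | s3 | s4
  deriving DecidableEq

inductive Dir | right | left | up
  deriving DecidableEq

open State Dir

instance : Fintype State := ⟨{s0, s1, s2, s3, s4}, fun s => by cases s <;> simp⟩

instance : Fintype Dir := ⟨{right, left, up}, fun d => by cases d <;> simp⟩

def step : State → Dir → State
  | s0, right => s1
  | s1, left => s0
  | s1, up => s4
  | s2, left => s1
  | s2, right => s3
  | s3, _ => s3
  | s4, _ => s4
  | s, _ => s

noncomputable def reward (ε : ℝ) : State → Dir → ℝ
  | s2, right => ε
  | s4, _ => 1
  | _, _ => 0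

def constituent (k : Fin 3) : ℕ → State → Dir := fun _ _ => ![right, left, up] k

variable {ε : ℝ} {H : ℕ}

theorem dval_s3 (π : ℕ → State → Dir) (h : ℕ) : dval step (reward ε) H π h s3 = 0 := by
  simpa using dval_eq_of_mapsTo (T := {s3}) (r := 0) (fun _ _ hs => by cases hs; rfl)
    (fun h s hs => by cases hs; cases π h s3 <;> rfl) h rfl

theorem dval_s4 (π : ℕ → State → Dir) (h : ℕ) :
    dval step (reward ε) H π h s4 = (H - h : ℕ) := by
  simpa using dval_eq_of_mapsTo (T := {s4}) (r := 1) (fun _ _ hs => by cases hs; rfl)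
    (fun h s hs => by cases hs; cases π h s4 <;> rfl) h rfl

theorem dval_constituent_s2 (hH : 0 < H) (k : Fin 3) :
    dval step (reward ε) H (constituent k) 0 s2 = ![ε, 0, 0] k := by
  fin_cases k
  · simp [dval_of_lt hH, constituent, reward, step, dval_s3]
  · simpa using dval_eq_of_mapsTo (T := {s0, s1, s2}) (r := 0)
      (fun _ s hs => by rcases hs with rfl | rfl | rfl <;> simp [constituent, step])
      (fun _ s hs => by rcases hs with rfl | rfl | rfl <;> rfl) 0 (by simp)
  · simpa using dval_eq_of_mapsTo (T := {s2}) (r := 0)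
      (fun _ s hs => by cases hs; rfl) (fun _ s hs => by cases hs; rfl) 0 rfl

theorem reward_mem_Icc (hε0 : 0 < ε) (hε1 : ε < 1) (s : State) (d : Dir) :
    reward ε s d ∈ Set.Icc 0 1 := by
  cases s <;> cases d <;> simp only [reward, Set.mem_Icc] <;> constructor <;> linarith

end GapMDP

open GapMDP GapMDP.State GapMDP.Dir in
/-- for any `0 < ε < 1` there is a finite deterministic MDP (with rewards
in `[0,1]`), a starting state, and constituent policies such that for all horizons
`H ≥ 3`, every max-following policy obtains cumulative reward at most `ε`, while some
(optimal) policy obtains cumulative reward `H − 2`. -/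
theorem max_following_vs_optimal_gap (ε : ℝ) (hε0 : 0 < ε) (hε1 : ε < 1) :
    ∃ (S A : Type) (_ : Fintype S) (_ : Fintype A)
      (next : S → A → S) (R : S → A → ℝ) (K : ℕ)
      (πc : Fin K → ℕ → S → A) (s0 : S),
      (∀ s a, 0 ≤ R s a ∧ R s a ≤ 1) ∧
      ∀ H : ℕ, 3 ≤ H →
        (∀ π : ℕ → S → A,
          (∀ h, h < H → ∀ s, ∃ k : Fin K, π h s = πc k h s ∧
            ∀ k' : Fin K, dval next R H (πc k') h s ≤ dval next R H (πc k) h s) →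
          dval next R H π 0 s0 ≤ ε) ∧
        (∃ π : ℕ → S → A, dval next R H π 0 s0 = (H : ℝ) - 2) := by
  refine ⟨State, Dir, inferInstance, inferInstance, step, reward ε, 3, constituent, s2,
    reward_mem_Icc hε0 hε1, fun H hH => ⟨fun π hπ => ?_, ?_⟩⟩
  · obtain ⟨k, hk, hmax⟩ := hπ 0 (by omega) s2
    have hk0 : k = 0 := by
      have hright_le := hmax 0
      rw [dval_constituent_s2 (by omega), dval_constituent_s2 (by omega)] at hright_le
      fin_cases k <;> simp at hright_le ⊢ <;> linarith
    subst hk0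
    simp [dval_of_lt (by omega : 0 < H), hk, constituent, step, reward, dval_s3]
  · refine ⟨fun h _ => if h = 0 then left else up, ?_⟩
    rw [dval_of_lt (by omega), dval_of_lt (by omega)]
    simp [step, reward, dval_s4, Nat.cast_sub (by omega : 2 ≤ H)]
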